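/- In a ring of k ≥ 2 diamonds G, every loop zero forcing set of G has cardinality at least k + 2 = n(G)/4 + 2; in particular, no loop zero forcing set of cardinality n(G)/4 + 1 exists. -/

import Mathlib

open SimpleGraph

variable {V : Type*}

/-- The set of vertices eventually colored blue when the vertices of `S` are initially
colored blue and the standard zero forcing color change rule is iterated. -/
inductive ZeroForce (G : SimpleGraph V) (S : Set V) : V → Prop
  | init (v : V) (h : v ∈ S) : ZeroForce G S v
  | force (v w : V) (hv : ZeroForce G S v) (hadj : G.Adj v w)
      (h : ∀ u, G.Adj v u → u ≠ w → ZeroForce G S u) : ZeroForce G S w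

/-- `S` is a zero forcing set of `G`. -/
def IsZeroForcingSet (G : SimpleGraph V) (S : Set V) : Prop :=
  ∀ v, ZeroForce G S v

/-- The zero forcing number `Z(G)`. -/
noncomputable def zeroForcingNumber (G : SimpleGraph V) : ℕ :=
  sInf {n | ∃ S : Set V, S.ncard = n ∧ IsZeroForcingSet G S}

/-- The set of vertices eventually colored blue when the vertices of `S` are initially
colored blue and the loop zero forcing color change rule is iterated:  a vertex `w`
becomes blue if it is the unique (possibly) white neighbor of a blue vertex, or if all
of its neighbors are blue. -/
inductive LoopZeroForce (G : SimpleGraph V) (S : Set V) : V → Prop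
  | init (v : V) (h : v ∈ S) : LoopZeroForce G S v
  | force (v w : V) (hv : LoopZeroForce G S v) (hadj : G.Adj v w)
      (h : ∀ u, G.Adj v u → u ≠ w → LoopZeroForce G S u) : LoopZeroForce G S w
  | loop (w : V) (h : ∀ u, G.Adj w u → LoopZeroForce G S u) : LoopZeroForce G S w

/-- `S` is a loop zero forcing set of `G`. -/
def IsLoopZeroForcingSet (G : SimpleGraph V) (S : Set V) : Prop :=
  ∀ v, LoopZeroForce G S v

/-- The loop zero forcing number `Z_ℓ̇(G)`. -/
noncomputable def loopZeroForcingNumber (G : SimpleGraph V) : ℕ :=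
  sInf {n | ∃ S : Set V, S.ncard = n ∧ IsLoopZeroForcingSet G S}

/-- The closed neighborhood `N[v]`. -/
def closedNbhd (G : SimpleGraph V) (v : V) : Set V := insert v (G.neighborSet v)

/-- A legal (closed neighborhood) sequence. -/
def IsLegalSeq (G : SimpleGraph V) (l : List V) : Prop :=
  l.Nodup ∧ ∀ (i : ℕ) (hi : i + 1 < l.length),
    ∃ u ∈ closedNbhd G (l.get ⟨i + 1, hi⟩), ∀ x ∈ l.take (i + 1), u ∉ closedNbhd G x

/-- A dominating sequence: a legal sequence whose vertex set dominates `G`. -/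
def IsDominatingSeq (G : SimpleGraph V) (l : List V) : Prop :=
  IsLegalSeq G l ∧ ∀ v : V, ∃ x ∈ l, v ∈ closedNbhd G x

/-- The Grundy domination number `γ_gr(G)`. -/
noncomputable def grundyDominationNumber (G : SimpleGraph V) : ℕ :=
  sSup {n | ∃ l : List V, IsDominatingSeq G l ∧ l.length = n}

/-- A `Z`-sequence: a legal sequence in which every vertex after the first footprints a
vertex distinct from itself. -/
def IsZSeq (G : SimpleGraph V) (l : List V) : Prop :=
  IsLegalSeq G l ∧ ∀ (i : ℕ) (hi : i + 1 < l.length),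
    ∃ u ∈ G.neighborSet (l.get ⟨i + 1, hi⟩), ∀ x ∈ l.take (i + 1), u ∉ closedNbhd G x

/-- The degree of a vertex, via `Set.ncard`. -/
noncomputable def ndeg (G : SimpleGraph V) (v : V) : ℕ := (G.neighborSet v).ncard

/-- The minimum degree `δ(G)`. -/
noncomputable def minDeg (G : SimpleGraph V) : ℕ := sInf {d | ∃ v : V, ndeg G v = d}

/-- The ring of `k` diamonds:  vertex `(i, 0)` is `uᵢ`, `(i, 1)` is `vᵢ`, `(i, 2)` is `wᵢ`
and `(i, 3)` is `yᵢ`; the `i`-th diamond is `K₄` on `{uᵢ, vᵢ, wᵢ, yᵢ}` minus the edge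
`uᵢyᵢ`, and `yᵢ` is joined to `u_{i+1}` (indices mod `k`). -/
def ringOfDiamonds (k : ℕ) : SimpleGraph (Fin k × Fin 4) :=
  SimpleGraph.fromRel (fun a b =>
    (a.1 = b.1 ∧ ¬(a.2 = 0 ∧ b.2 = 3) ∧ ¬(a.2 = 3 ∧ b.2 = 0)) ∨
    (b.1.val = (a.1.val + 1) % k ∧ a.2 = 3 ∧ b.2 = 0))

/-- `G` has no induced `K_{1,3}`. -/
def ClawFree (G : SimpleGraph V) : Prop :=
  ¬ ∃ v a b c : V, a ≠ b ∧ a ≠ c ∧ b ≠ c ∧ G.Adj v a ∧ G.Adj v b ∧ G.Adj v c ∧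
    ¬ G.Adj a b ∧ ¬ G.Adj a c ∧ ¬ G.Adj b c

/-- `G` is connected and remains connected after deleting any single edge. -/
def TwoEdgeConnected (G : SimpleGraph V) : Prop :=
  G.Connected ∧ ∀ e ∈ G.edgeSet, (G.deleteEdges {e}).Connected

/-- `G` is a maximal outerplanar graph:  its vertices can be arranged on a cycle
(the outer face) so that all edges of `G` are cycle edges or pairwise non-crossing
chords, and `G` has `2n - 3` edges (i.e. it is a triangulation of the polygon). -/
def IsMOP (G : SimpleGraph V) [Fintype V] : Prop :=
  3 ≤ Fintype.card V ∧
  ∃ f : Fin (Fintype.card V) ≃ V,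
    (∀ i j : Fin (Fintype.card V), j.val = (i.val + 1) % Fintype.card V → G.Adj (f i) (f j)) ∧
    (∀ a b c d : Fin (Fintype.card V), a.val < c.val → c.val < b.val → b.val < d.val →
      G.Adj (f a) (f b) → ¬ G.Adj (f c) (f d)) ∧
    G.edgeSet.ncard = 2 * Fintype.card V - 3

/-- A triangle of `G`: three mutually adjacent vertices. In a maximal outerplanar graph
these are exactly the inner (triangular) faces. -/
def IsTriangle (G : SimpleGraph V) (T : Finset V) : Prop :=
  T.card = 3 ∧ ∀ x ∈ T, ∀ y ∈ T, x ≠ y → G.Adj x y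

/-- In a maximal outerplanar graph, an edge lies on the outer face iff it lies in
exactly one triangle. -/
def IsBoundaryEdge (G : SimpleGraph V) (x y : V) : Prop :=
  G.Adj x y ∧ {T : Finset V | IsTriangle G T ∧ x ∈ T ∧ y ∈ T}.ncard = 1

/-- A separator triangle: an inner triangular face none of whose edges lies on the
outer face. -/
def IsSeparatorTriangle (G : SimpleGraph V) (T : Finset V) : Prop :=
  IsTriangle G T ∧ ∀ x ∈ T, ∀ y ∈ T, x ≠ y → ¬ IsBoundaryEdge G x y

/-- A serpentine graph: a maximal outerplanar graph with no separator triangle. -/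
def IsSerpentine (G : SimpleGraph V) [Fintype V] : Prop :=
  IsMOP G ∧ ¬ ∃ T : Finset V, IsSeparatorTriangle G T

/-- The weak planar dual of a maximal outerplanar graph: vertices are the triangles,
two triangles being adjacent when they share an edge. -/
def dualGraph (G : SimpleGraph V) [DecidableEq V] :
    SimpleGraph {T : Finset V // IsTriangle G T} where
  Adj A B := A ≠ B ∧ (A.1 ∩ B.1).card = 2
  symm := by
    constructor
    intro A B h
    exact ⟨h.1.symm, by rw [Finset.inter_comm]; exact h.2⟩
  loopless := by constructor; intro A h; exact h.1 rfl

/-- Degree in the weak planar dual. -/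
noncomputable def dualDeg (G : SimpleGraph V) [DecidableEq V]
    (A : {T : Finset V // IsTriangle G T}) : ℕ :=
  ((dualGraph G).neighborSet A).ncard

/-- A serpentine leaf: the set of triangles along the unique path in the weak dual from
a leaf of the dual to the nearest vertex of dual degree greater than 2. -/
def IsSerpentineLeaf (G : SimpleGraph V) [DecidableEq V]
    (L : Set {T : Finset V // IsTriangle G T}) : Prop :=
  ∃ (a b : {T : Finset V // IsTriangle G T}) (p : (dualGraph G).Walk a b),
    p.IsPath ∧ dualDeg G a = 1 ∧ 2 < dualDeg G b ∧
    (∀ c ∈ p.support, c ≠ a → c ≠ b → dualDeg G c = 2) ∧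
    L = {c | c ∈ p.support}

/-- A fan leaf: a serpentine leaf all of whose triangles share a common vertex lying on
a separator triangle. -/
def IsFanLeaf (G : SimpleGraph V) [DecidableEq V]
    (L : Set {T : Finset V // IsTriangle G T}) : Prop :=
  IsSerpentineLeaf G L ∧
    ∃ v : V, (∃ T : Finset V, IsSeparatorTriangle G T ∧ v ∈ T) ∧ ∀ A ∈ L, v ∈ A.1

/-- A serpentine path: a maximal nonempty set of triangles whose dual vertices have dual
degree 2 and form the unique path between two distinct dual vertices of degree at
least 3. -/
def IsSerpentinePath (G : SimpleGraph V) [DecidableEq V]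
    (P : Set {T : Finset V // IsTriangle G T}) : Prop :=
  ∃ (a b : {T : Finset V // IsTriangle G T}) (p : (dualGraph G).Walk a b),
    p.IsPath ∧ a ≠ b ∧ 3 ≤ dualDeg G a ∧ 3 ≤ dualDeg G b ∧
    (∀ c ∈ p.support, c ≠ a → c ≠ b → dualDeg G c = 2) ∧
    P = {c | c ∈ p.support ∧ c ≠ a ∧ c ≠ b} ∧ P.Nonempty

/-- A vertex lying on some separator triangle. -/
def SepVertex (G : SimpleGraph V) (v : V) : Prop :=
  ∃ T : Finset V, IsSeparatorTriangle G T ∧ v ∈ T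

/-- The subgraph `G_△` of `G` formed by the separator triangles. -/
def sepSubgraph (G : SimpleGraph V) : SimpleGraph {v : V // SepVertex G v} where
  Adj x y := G.Adj x.1 y.1 ∧ ∃ T : Finset V, IsSeparatorTriangle G T ∧ x.1 ∈ T ∧ y.1 ∈ T
  symm := by
    constructor
    rintro x y ⟨h, T, hT, hx, hy⟩
    exact ⟨h.symm, T, hT, hy, hx⟩
  loopless := by constructor; rintro x ⟨h, -⟩; exact G.loopless.irrefl _ h

/-- The vertex set (in `V`) of a connected component of `G_△`. -/
def compVerts (G : SimpleGraph V) (c : (sepSubgraph G).ConnectedComponent) : Set V :=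
  {v | ∃ h : SepVertex G v, (sepSubgraph G).connectedComponentMk ⟨v, h⟩ = c}

/-- A connected component `c` of `G_△` is adjacent to a set `P` of triangles if some
separator triangle lying in `c` shares an edge with a triangle of `P`. -/
def CompAdjTriangles (G : SimpleGraph V) [DecidableEq V]
    (c : (sepSubgraph G).ConnectedComponent)
    (P : Set {T : Finset V // IsTriangle G T}) : Prop :=
  ∃ A : {T : Finset V // IsTriangle G T}, IsSeparatorTriangle G A.1 ∧
    (∀ v ∈ A.1, v ∈ compVerts G c) ∧ ∃ B ∈ P, (dualGraph G).Adj A B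

/-- A cyclic interval of `Fin m`. -/
def IsCyclicInterval {m : ℕ} (S : Set (Fin m)) : Prop :=
  ∃ a len : ℕ, S = {i : Fin m | ∃ j : ℕ, j < len ∧ i.val = (a + j) % m}

/-- `G` is the Halin graph obtained from the spanning tree `T` (with at least four
vertices and no vertex of degree 2) by joining the leaves of `T` in the cyclic order
`σ`.  The planarity of the construction is encoded by the requirement that for every
edge of `T` the leaves on either side of it occupy a cyclic interval of the outer
cycle. -/
def IsHalinStructure (G T : SimpleGraph V) [Fintype V] {m : ℕ} (σ : Fin m → V) : Prop :=
  T.IsTree ∧ 4 ≤ Fintype.card V ∧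
  (∀ v, ndeg T v ≠ 2) ∧
  Function.Injective σ ∧
  (∀ v, ndeg T v = 1 ↔ ∃ i, σ i = v) ∧
  (∀ v w, G.Adj v w ↔ T.Adj v w ∨
    ∃ i j : Fin m, j.val = (i.val + 1) % m ∧
      ((v = σ i ∧ w = σ j) ∨ (v = σ j ∧ w = σ i))) ∧
  (∀ v w, T.Adj v w →
    IsCyclicInterval {i : Fin m | (T.deleteEdges {s(v, w)}).Reachable v (σ i)})

/-- An end support vertex of the tree `T`: a vertex adjacent to a leaf with at most one
non-leaf neighbor. -/
def IsEndSupport (T : SimpleGraph V) (v : V) : Prop :=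
  (∃ u, T.Adj v u ∧ ndeg T u = 1) ∧ {u | T.Adj v u ∧ ndeg T u ≠ 1}.ncard ≤ 1

/-!
A white set `F` in which every vertex has a neighbour in `F`, and outside of which no vertex
has exactly one neighbour in `F`, can never be entered by the loop color change rule; so a
loop zero forcing set meets every such *loop fort*. In the ring of diamonds the following are
loop forts: each pair `{vᵢ, wᵢ}`; the set of all end vertices `uᵢ, yᵢ`; and, for any choice of
one interior vertex `cᵢ ∈ {vᵢ, wᵢ}` per diamond, both `{uᵢ} ∪ {cᵢ}` and `{yᵢ} ∪ {cᵢ}`.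
A loop zero forcing set `S` therefore has an interior vertex in every diamond. If it contains
both interior vertices of some diamond, it has `k + 1` interior vertices and also meets the
end vertices. Otherwise let `cᵢ` be the interior vertex of diamond `i` missing from `S`: the
last two forts put some `uᵢ` and some `yⱼ` into `S`. Either way `|S| ≥ k + 2`.
-/

def IsLoopFort (G : SimpleGraph V) (F : Set V) : Prop :=
  (∀ v ∈ F, ∃ u ∈ F, G.Adj v u) ∧
    ∀ v ∉ F, ∀ u ∈ F, G.Adj v u → ∃ x ∈ F, ∃ y ∈ F, x ≠ y ∧ G.Adj v x ∧ G.Adj v y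

theorem IsLoopFort.inter_nonempty {G : SimpleGraph V} {S F : Set V} (hF : IsLoopFort G F)
    (hFne : F.Nonempty) (hS : IsLoopZeroForcingSet G S) : (S ∩ F).Nonempty := by
  by_contra hSF
  have hblue : ∀ v, LoopZeroForce G S v → v ∉ F := by
    intro v hv
    induction hv with
    | init v hv => exact fun hvF => hSF ⟨v, hv, hvF⟩
    | force v w _ hvw _ hvF ihF =>
      intro hwF
      obtain ⟨x, hxF, y, hyF, hxy, hvx, hvy⟩ := hF.2 v hvF w hwF hvw
      by_cases hxw : x = w
      · exact ihF y hvy (fun h => hxy (hxw.trans h.symm)) hyF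
      · exact ihF x hvx hxw hxF
    | loop w _ ihF =>
      intro hwF
      obtain ⟨u, huF, hwu⟩ := hF.1 w hwF
      exact ihF u hwu huF
  obtain ⟨v, hv⟩ := hFne
  exact hblue v (hS v) hv

theorem card_le_ncard_of_forall_exists_mk_mem {α β : Type*} {T : Set (α × β)}
    (h : ∀ a, ∃ b, (a, b) ∈ T) (hT : T.Finite := by toFinite_tac) : Nat.card α ≤ T.ncard := by
  have hfst : Prod.fst '' T = Set.univ :=
    Set.eq_univ_of_forall fun a => let ⟨b, hb⟩ := h a; ⟨(a, b), hb, rfl⟩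
  calc Nat.card α = (Prod.fst '' T).ncard := by rw [hfst, Set.ncard_univ]
    _ ≤ T.ncard := Set.ncard_image_le hT

section RingOfDiamonds

variable {k : ℕ}

theorem ringOfDiamonds_adj_of_interior {i : Fin k} {a b : Fin 4} (ha : a = 1 ∨ a = 2)
    (hab : a ≠ b) : (ringOfDiamonds k).Adj (i, a) (i, b) := by
  rw [ringOfDiamonds, fromRel_adj]
  refine ⟨fun h => hab (congrArg Prod.snd h), Or.inl (Or.inl ⟨rfl, ?_, ?_⟩)⟩ <;>
    simp only <;> omega

theorem ringOfDiamonds_adj_succ [NeZero k] (i : Fin k) :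
    (ringOfDiamonds k).Adj (i, 3) (i + 1, 0) := by
  rw [ringOfDiamonds, fromRel_adj]
  refine ⟨fun h => by simp at h, Or.inl (Or.inr ⟨?_, rfl, rfl⟩)⟩
  simp [Fin.val_add]

theorem ringOfDiamonds_fst_eq_of_adj {p q : Fin k × Fin 4} (h : (ringOfDiamonds k).Adj p q)
    (hq : q.2 = 1 ∨ q.2 = 2) : p.1 = q.1 := by
  rw [ringOfDiamonds, fromRel_adj] at h
  omega

theorem ringOfDiamonds_exists_adj_end [NeZero k] {p : Fin k × Fin 4} (hp : p.2 = 0 ∨ p.2 = 3) :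
    ∃ q, (ringOfDiamonds k).Adj p q ∧ q.2 = 3 - p.2 := by
  obtain ⟨i, a⟩ := p
  rcases hp with rfl | rfl
  · refine ⟨(i - 1, 3), ?_, rfl⟩
    have h := (ringOfDiamonds_adj_succ (i - 1)).symm
    rwa [sub_add_cancel] at h
  · exact ⟨(i + 1, 0), ringOfDiamonds_adj_succ i, rfl⟩

theorem isLoopFort_ringOfDiamonds_interior (i : Fin k) :
    IsLoopFort (ringOfDiamonds k) {p | p.1 = i ∧ (p.2 = 1 ∨ p.2 = 2)} := by
  refine ⟨?_, ?_⟩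
  · rintro ⟨j, a⟩ ⟨rfl, ha : a = 1 ∨ a = 2⟩
    exact ⟨(j, 3 - a), ⟨rfl, by simp only; omega⟩, ringOfDiamonds_adj_of_interior ha (by omega)⟩
  · rintro ⟨j, b⟩ hb u ⟨hu, hu'⟩ hadj
    obtain rfl : j = i := (ringOfDiamonds_fst_eq_of_adj hadj hu').trans hu
    have hb' : b ≠ 1 ∧ b ≠ 2 := by simp only [Set.mem_ofPred_eq, true_and] at hb; omega
    exact ⟨(j, 1), ⟨rfl, .inl rfl⟩, (j, 2), ⟨rfl, .inr rfl⟩, by simp,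
      (ringOfDiamonds_adj_of_interior (.inl rfl) (Ne.symm hb'.1)).symm,
      (ringOfDiamonds_adj_of_interior (.inr rfl) (Ne.symm hb'.2)).symm⟩

theorem isLoopFort_ringOfDiamonds_ends [NeZero k] :
    IsLoopFort (ringOfDiamonds k) {p | p.2 = 0 ∨ p.2 = 3} := by
  refine ⟨fun p hp => ?_, ?_⟩
  · obtain ⟨q, hpq, hq⟩ := ringOfDiamonds_exists_adj_end hp
    exact ⟨q, by simp only [Set.mem_ofPred_eq] at hp ⊢; omega, hpq⟩
  · rintro ⟨j, b⟩ hb - - -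
    have hb' : b = 1 ∨ b = 2 := by simp only [Set.mem_ofPred_eq] at hb; omega
    exact ⟨(j, 0), .inl rfl, (j, 3), .inr rfl, by simp,
      ringOfDiamonds_adj_of_interior hb' (by omega), ringOfDiamonds_adj_of_interior hb' (by omega)⟩

theorem isLoopFort_ringOfDiamonds_ends_interior [NeZero k] {r : Fin 4} (hr : r = 0 ∨ r = 3)
    {c : Fin k → Fin 4} (hc : ∀ i, c i = 1 ∨ c i = 2) :
    IsLoopFort (ringOfDiamonds k) {p | p.2 = r ∨ p.2 = c p.1} := by
  refine ⟨?_, ?_⟩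
  · rintro ⟨i, a⟩ ha
    have hci := hc i
    simp only [Set.mem_ofPred_eq] at ha
    rcases ha with rfl | rfl
    · exact ⟨(i, c i), .inr rfl, (ringOfDiamonds_adj_of_interior hci (by omega)).symm⟩
    · exact ⟨(i, r), .inl rfl, ringOfDiamonds_adj_of_interior hci (by omega)⟩
  · rintro ⟨j, b⟩ hb - - -
    have hcj := hc j
    simp only [Set.mem_ofPred_eq] at hb
    by_cases hb3 : b = 3 - r
    · obtain ⟨q, hq, hq2⟩ := ringOfDiamonds_exists_adj_end (p := (j, b)) (by simp only; omega)
      simp only at hq2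
      exact ⟨(j, c j), .inr rfl, q, .inl (by omega), fun h => by subst h; simp at hq2; omega,
        (ringOfDiamonds_adj_of_interior hcj (by omega)).symm, hq⟩
    · have hb' : b = 1 ∨ b = 2 := by omega
      exact ⟨(j, r), .inl rfl, (j, c j), .inr rfl, fun h => by simp at h; omega,
        ringOfDiamonds_adj_of_interior hb' (by omega),
        ringOfDiamonds_adj_of_interior hb' (by omega)⟩

theorem IsLoopZeroForcingSet.exists_mem_snd_eq_ringOfDiamonds [NeZero k]
    {S : Set (Fin k × Fin 4)} (hS : IsLoopZeroForcingSet (ringOfDiamonds k) S)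
    {c : Fin k → Fin 4} (hc : ∀ i, c i = 1 ∨ c i = 2) (hcS : ∀ i, (i, c i) ∉ S)
    {r : Fin 4} (hr : r = 0 ∨ r = 3) : ∃ x ∈ S, x.2 = r := by
  obtain ⟨x, hxS, hx⟩ :=
    (isLoopFort_ringOfDiamonds_ends_interior hr hc).inter_nonempty ⟨(0, r), .inl rfl⟩ hS
  exact ⟨x, hxS, hx.resolve_right fun h => hcS x.1 (by rw [← h]; exact hxS)⟩

theorem IsLoopZeroForcingSet.add_two_le_ncard_ringOfDiamonds [NeZero k]
    {S : Set (Fin k × Fin 4)} (hS : IsLoopZeroForcingSet (ringOfDiamonds k) S) :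
    k + 2 ≤ S.ncard := by
  set I : Set (Fin k × Fin 4) := {p | p.2 = 1 ∨ p.2 = 2}
  have hsplit := Set.ncard_inter_add_ncard_sdiff_eq_ncard S I
  have hW : ∀ i, ∃ a, (i, a) ∈ S ∩ I := fun i => by
    obtain ⟨⟨j, a⟩, haS, rfl, ha⟩ :=
      (isLoopFort_ringOfDiamonds_interior i).inter_nonempty ⟨(i, 1), rfl, .inl rfl⟩ hS
    exact ⟨a, haS, ha⟩
  have hI : k ≤ (S ∩ I).ncard :=
    (Nat.card_fin k).symm.trans_le (card_le_ncard_of_forall_exists_mk_mem hW)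
  by_cases hfull : ∃ i, (i, 1) ∈ S ∧ (i, 2) ∈ S
  · obtain ⟨i, hi1, hi2⟩ := hfull
    have hI' : k ≤ ((S ∩ I) \ {(i, 1)}).ncard := by
      refine (Nat.card_fin k).symm.trans_le (card_le_ncard_of_forall_exists_mk_mem fun j => ?_)
      by_cases hj : j = i
      · exact ⟨2, ⟨hj ▸ hi2, .inr rfl⟩, by simp [hj]⟩
      · obtain ⟨a, ha⟩ := hW j
        exact ⟨a, ha, by simp [hj]⟩
    have hE : (S \ I).Nonempty := by
      obtain ⟨x, hxS, hx⟩ := isLoopFort_ringOfDiamonds_ends.inter_nonempty ⟨(0, 0), .inl rfl⟩ hS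
      exact ⟨x, hxS, by simp only [I, Set.mem_ofPred_eq] at hx ⊢; omega⟩
    have hdiff := Set.ncard_sdiff_singleton_add_one (s := S ∩ I) ⟨hi1, .inl rfl⟩
    have hEpos := (Set.ncard_pos (S \ I).toFinite).2 hE
    omega
  · classical
    push Not at hfull
    set c : Fin k → Fin 4 := fun i => if (i, 1) ∈ S then 2 else 1
    have hc : ∀ i, c i = 1 ∨ c i = 2 := fun i => by by_cases h : (i, 1) ∈ S <;> simp [c, h]
    have hcS : ∀ i, (i, c i) ∉ S := fun i => by by_cases h : (i, 1) ∈ S <;> simp [c, h, hfull]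
    obtain ⟨u, huS, hu⟩ := hS.exists_mem_snd_eq_ringOfDiamonds hc hcS (.inl rfl)
    obtain ⟨y, hyS, hy⟩ := hS.exists_mem_snd_eq_ringOfDiamonds hc hcS (.inr rfl)
    have hE : 1 < (S \ I).ncard := (Set.one_lt_ncard (S \ I).toFinite).2
      ⟨u, ⟨huS, by simp [I, hu]⟩, y, ⟨hyS, by simp [I, hy]⟩, fun h => by subst h; simp_all⟩
    omega

end RingOfDiamonds

/-- In a ring of `k ≥ 2` diamonds, every loop zero forcing set has cardinality at least
`k + 2 = n(G)/4 + 2`; in particular there is no loop zero forcing set of cardinality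
`n(G)/4 + 1`. -/
theorem stmt_14 (k : ℕ) (hk : 2 ≤ k) :
    (∀ S : Set (Fin k × Fin 4), IsLoopZeroForcingSet (ringOfDiamonds k) S →
      k + 2 ≤ S.ncard) ∧
    (k + 2 = Fintype.card (Fin k × Fin 4) / 4 + 2) ∧
    ¬ ∃ S : Set (Fin k × Fin 4), IsLoopZeroForcingSet (ringOfDiamonds k) S ∧
      S.ncard = Fintype.card (Fin k × Fin 4) / 4 + 1 := by
  have : NeZero k := ⟨by omega⟩
  have hn : Fintype.card (Fin k × Fin 4) / 4 = k := by simp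
  refine ⟨fun S hS => hS.add_two_le_ncard_ringOfDiamonds, by rw [hn], ?_⟩
  rintro ⟨S, hS, hcard⟩
  have hbound := hS.add_two_le_ncard_ringOfDiamonds
  omega
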